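/- arXiv:2402.13998 — 4 statements merged into one kernel-verified Lean document; each statement's English description precedes it below -/
import Mathlib

section
/- Let G be a finite group such that every irreducible complex character of G has degree at most 2. Then AD(G) belongs to the set {2 - 1/n : n a positive natural number}. -/
noncomputable section

/-- The set of irreducible complex characters of a group `G`: the characters of
simple (irreducible) finite-dimensional complex representations of `G`. -/
def Irr (G : Type) [Group G] : Set (G → ℂ) :=
  {χ | ∃ V : FDRep ℂ G, CategoryTheory.Simple V ∧ χ = FDRep.character V}

/-- The degree of a character: its value at the identity (a real number, since the value
at the identity is the dimension of the underlying representation). -/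
def deg {G : Type} [Group G] (χ : G → ℂ) : ℝ := (χ 1).re

/-- The Fourier antidiagonal constant `AD(G) = |G|⁻¹ ∑_{φ ∈ Irr(G)} d(φ)³`. -/
def AD (G : Type) [Group G] : ℝ :=
  (1 / Nat.card G) * ∑ᶠ χ ∈ Irr G, deg χ ^ 3

end

/-!
Decomposing `ℂ[G]` into simple left ideals and using the orthogonality of characters, every
irreducible character `χ` occurs in the regular character with multiplicity `χ 1`, so
`∑ χ, χ(1)² = |G|`. The characters of degree one are the homomorphisms `G → ℂˣ`, so there are
`a = |G : G'|` of them. If every degree is `1` or `2`, then `d³ = 2d² - [d = 1]`, hence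
`∑ χ, χ(1)³ = 2|G| - a` and `AD(G) = 2 - a / |G| = 2 - 1 / |G'|`.
-/

open CategoryTheory Module Finset
open scoped MonoidAlgebra

namespace Representation

variable {k G : Type*} [Field k] [Monoid G] (M : Type*) [AddCommGroup M] [Module k M]
  [Module k[G] M] [IsScalarTower k k[G] M]

theorem ofModule'_apply (g : G) (x : M) :
    ofModule' (k := k) (G := G) M g x = MonoidAlgebra.of k G g • x := by
  simp [ofModule']

noncomputable def subrepresentationOfModule'OrderIso :
    Subrepresentation (ofModule' (k := k) (G := G) M) ≃o Submodule k[G] M where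
  toFun σ :=
    { carrier := σ
      add_mem' := σ.toSubmodule.add_mem
      zero_mem' := σ.toSubmodule.zero_mem
      smul_mem' := fun r x (hx : x ∈ σ.toSubmodule) => by
        induction r using MonoidAlgebra.induction_on with
        | of g => rw [← ofModule'_apply]; exact σ.apply_mem_toSubmodule g hx
        | add f f' hf hf' => rw [add_smul]; exact σ.toSubmodule.add_mem hf hf'
        | smul c f hf => rw [smul_assoc]; exact σ.toSubmodule.smul_mem c hf }
  invFun N := ⟨N.restrictScalars k, fun g x hx => by
    rw [Submodule.restrictScalars_mem, ofModule'_apply]; exact N.smul_mem _ hx⟩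
  left_inv _ := rfl
  right_inv _ := rfl
  map_rel_iff' := Iff.rfl

instance isIrreducible_ofModule' [IsSimpleModule k[G] M] :
    (ofModule' (k := k) (G := G) M).IsIrreducible :=
  (subrepresentationOfModule'OrderIso M).isSimpleOrder_iff.2 ((isSimpleModule_iff _ _).1 ‹_›)

end Representation

theorem FDRep.character_mul_of_finrank_eq_one {k G : Type} [Field k] [Monoid G] (V : FDRep k G)
    (hV : finrank k V = 1) (g h : G) :
    V.character (g * h) = V.character g * V.character h := by
  obtain ⟨a, ha, -⟩ := (V.ρ g).existsUnique_eq_smul_id_of_finrank_eq_one hV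
  obtain ⟨b, hb, -⟩ := (V.ρ h).existsUnique_eq_smul_id_of_finrank_eq_one hV
  simp [FDRep.character, ha, hb, hV, smul_smul, Module.End.mul_eq_comp, mul_comm]

theorem MonoidAlgebra.trace_mulLeft_of {k G : Type*} [CommRing k] [Group G] [Fintype G]
    [DecidableEq G] (g : G) :
    LinearMap.trace k k[G] (LinearMap.mulLeft k (of k G g)) =
      if g = 1 then (Nat.card G : k) else 0 := by
  rw [LinearMap.trace_eq_matrix_trace k (MonoidAlgebra.basis G k), Matrix.trace]
  simp only [Matrix.diag, LinearMap.toMatrix_apply, MonoidAlgebra.basis_apply,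
    LinearMap.mulLeft_apply, MonoidAlgebra.of_apply, MonoidAlgebra.single_mul_single, one_mul]
  simp [MonoidAlgebra.basis, Finsupp.single_apply, mul_eq_right]

namespace FDRep

variable {G : Type} [Group G] [Fintype G]

theorem simple_of_isIrreducible {V : Type} [AddCommGroup V] [Module ℂ V]
    [FiniteDimensional ℂ V] (ρ : Representation ℂ G V) [ρ.IsIrreducible] :
    Simple (FDRep.of ρ) := by
  have : Invertible (Nat.card G : ℂ) := invertibleOfNonzero (NeZero.ne _)
  have h := Representation.char_orthonormal ρ ρ
  rw [if_pos ⟨Representation.Equiv.refl ρ⟩, inv_mul_eq_one₀ (NeZero.ne _)] at h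
  exact (simple_iff_char_is_norm_one _).2 h.symm

theorem finrank_pos_of_simple (V : FDRep ℂ G) [Simple V] : 0 < finrank ℂ V := by
  by_contra! h0
  have : Subsingleton V := Module.finrank_zero_iff.mp (Nat.le_zero.mp h0)
  have h := (simple_iff_char_is_norm_one V).1 ‹_›
  simp only [character, Subsingleton.elim (V.ρ _) 0, map_zero, zero_mul,
    Finset.sum_const_zero] at h
  exact NeZero.ne _ h.symm

theorem char_orthonormal' (V W : FDRep ℂ G) [Simple V] [Simple W] :
    (Nat.card G : ℂ)⁻¹ * ∑ g, V.character g * W.character g⁻¹ =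
      if V.character = W.character then 1 else 0 := by
  have : Invertible (Nat.card G : ℂ) := invertibleOfNonzero (NeZero.ne _)
  split_ifs with hχ
  · simpa [← hχ, Nonempty.intro (Iso.refl V)] using char_orthonormal V V
  · have : ¬Nonempty (V ≅ W) := fun ⟨i⟩ => hχ (char_iso i)
    simpa [this] using char_orthonormal V W

variable [DecidableEq G]

theorem exists_simple_sum_character_eq_regular :
    ∃ (ι : Type) (_ : Fintype ι) (V : ι → FDRep ℂ G), (∀ i, Simple (V i)) ∧
      ∀ g, ∑ i, (V i).character g = if g = 1 then (Nat.card G : ℂ) else 0 := by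
  obtain ⟨s, hind, htop, hsimple⟩ :=
    IsSemisimpleModule.exists_sSupIndep_sSup_simples_eq_top ℂ[G] ℂ[G]
  have : Fintype s := (WellFoundedGT.finite_of_sSupIndep hind).fintype
  have : ∀ m : s, IsSimpleModule ℂ[G] m := fun m => hsimple m m.2
  let N : s → Submodule ℂ ℂ[G] := fun m => (m : Submodule ℂ[G] ℂ[G]).restrictScalars ℂ
  have hN : DirectSum.IsInternal N := by
    refine DirectSum.isInternal_submodule_of_iSupIndep_of_iSup_eq_top (fun m => ?_) ?_
    · simpa only [N, ← Submodule.restrictScalars_iSup, Submodule.disjoint_restrictScalars_iff]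
        using (sSupIndep_iff s).1 hind m
    · rw [← Submodule.restrictScalars_iSup, ← sSup_eq_iSup', htop, Submodule.restrictScalars_top]
  have hmaps (g : G) (m : s) :
      Set.MapsTo (LinearMap.mulLeft ℂ (MonoidAlgebra.of ℂ G g)) (N m) (N m) :=
    fun x hx => (m : Submodule ℂ[G] ℂ[G]).smul_mem (MonoidAlgebra.of ℂ G g) hx
  refine ⟨s, inferInstance, fun m => FDRep.of (Representation.ofModule' (k := ℂ) (G := G) m),
    fun m => simple_of_isIrreducible _, fun g => ?_⟩
  rw [← MonoidAlgebra.trace_mulLeft_of, LinearMap.trace_eq_sum_trace_restrict hN (hmaps g)]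
  -- left multiplication by `g` restricted to `m` is `ofModule' m g` by definition
  rfl

theorem card_filter_character_eq {ι : Type} [Fintype ι] (V : ι → FDRep ℂ G) [∀ i, Simple (V i)]
    (hV : ∀ g, ∑ i, (V i).character g = if g = 1 then (Nat.card G : ℂ) else 0)
    (W : FDRep ℂ G) [Simple W] :
    (#{i | (V i).character = W.character} : ℂ) = W.character 1 := by
  calc (#{i | (V i).character = W.character} : ℂ)
      = ∑ i, (Nat.card G : ℂ)⁻¹ * ∑ g, (V i).character g * W.character g⁻¹ := by
        simp only [char_orthonormal', Finset.sum_boole]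
    _ = (Nat.card G : ℂ)⁻¹ * ∑ g, (∑ i, (V i).character g) * W.character g⁻¹ := by
        simp only [← Finset.mul_sum, Finset.sum_mul]
        rw [Finset.sum_comm]
    _ = W.character 1 := by
        simp [hV, ite_mul]

end FDRep

section

variable {G : Type} [Group G] [Fintype G]

theorem exists_finset_eq_Irr_sum_sq :
    ∃ S : Finset (G → ℂ), Irr G = ↑S ∧ ∑ χ ∈ S, χ 1 ^ 2 = Nat.card G := by
  classical
  obtain ⟨ι, _, V, hV, hreg⟩ := FDRep.exists_simple_sum_character_eq_regular (G := G)
  have hmult := FDRep.card_filter_character_eq V hreg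
  refine ⟨univ.image fun i => (V i).character, Set.ext fun χ => ?_, ?_⟩
  · simp only [coe_image, coe_univ, Set.image_univ, Set.mem_range]
    constructor
    · rintro ⟨W, hW, rfl⟩
      by_contra! hne
      have h0 := hmult W
      rw [filter_false_of_mem fun i _ => hne i, card_empty, Nat.cast_zero, FDRep.char_one] at h0
      exact (FDRep.finrank_pos_of_simple W).ne' (by exact_mod_cast h0.symm)
    · rintro ⟨i, rfl⟩
      exact ⟨V i, hV i, rfl⟩
  · calc ∑ χ ∈ univ.image (fun i => (V i).character), χ 1 ^ 2
        = ∑ χ ∈ univ.image (fun i => (V i).character), #{i | (V i).character = χ} • χ 1 := by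
          refine sum_congr rfl fun χ hχ => ?_
          obtain ⟨j, -, rfl⟩ := mem_image.1 hχ
          rw [nsmul_eq_mul, hmult (V j), sq]
      _ = ∑ i, (V i).character 1 := (sum_comp _ _).symm
      _ = Nat.card G := by rw [hreg 1, if_pos rfl]

theorem exists_nat_eq_of_mem_Irr {χ : G → ℂ} (hχ : χ ∈ Irr G) : ∃ n : ℕ, 0 < n ∧ χ 1 = n := by
  obtain ⟨V, hV, rfl⟩ := hχ
  exact ⟨finrank ℂ V, FDRep.finrank_pos_of_simple V, FDRep.char_one V⟩

theorem ofReal_deg_of_mem_Irr {χ : G → ℂ} (hχ : χ ∈ Irr G) : (deg χ : ℂ) = χ 1 := by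
  obtain ⟨n, -, hn⟩ := exists_nat_eq_of_mem_Irr hχ
  simp [deg, hn]

theorem monoidHom_mem_Irr (f : G →* ℂ) : ⇑f ∈ Irr G := by
  let V := FDRep.of ((Algebra.lsmul ℂ ℂ ℂ).toMonoidHom.comp f)
  have hV : V.character = f := by
    ext g
    simp [V, FDRep.character, Algebra.lsmul_eq_smul_one]
  refine ⟨V, (FDRep.simple_iff_char_is_norm_one V).2 ?_, hV.symm⟩
  simp only [hV, ← map_mul, mul_inv_cancel, map_one, sum_const, card_univ, nsmul_eq_mul, mul_one,
    Nat.card_eq_fintype_card]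

theorem setOf_mem_Irr_and_eq_one_eq_range :
    {χ | χ ∈ Irr G ∧ χ 1 = 1} = Set.range (fun f : G →* ℂ => ⇑f) := by
  ext χ
  constructor
  · rintro ⟨⟨V, hV, rfl⟩, h1⟩
    have hV1 : finrank ℂ V = 1 := by exact_mod_cast (FDRep.char_one V).symm.trans h1
    exact ⟨⟨⟨V.character, h1⟩, V.character_mul_of_finrank_eq_one hV1⟩, rfl⟩
  · rintro ⟨f, rfl⟩
    exact ⟨monoidHom_mem_Irr f, map_one f⟩

theorem ncard_setOf_mem_Irr_and_eq_one :
    {χ | χ ∈ Irr G ∧ χ 1 = 1}.ncard = Nat.card (Abelianization G) := by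
  rw [setOf_mem_Irr_and_eq_one_eq_range, Set.ncard_range_of_injective DFunLike.coe_injective]
  have : NeZero (Monoid.exponent (Abelianization G) : ℂ) :=
    ⟨by exact_mod_cast Monoid.exponent_ne_zero_of_finite⟩
  calc Nat.card (G →* ℂ) = Nat.card (G →* ℂˣ) :=
        Nat.card_congr MonoidHom.toHomUnitsMulEquiv.toEquiv
    _ = Nat.card (Abelianization G →* ℂˣ) := Nat.card_congr Abelianization.lift
    _ = Nat.card (Abelianization G) := Nat.card_congr
        (CommGroup.monoidHom_mulEquiv_of_hasEnoughRootsOfUnity (Abelianization G) ℂ).some.toEquiv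

end

theorem stmt_0 (G : Type) [Group G] [Finite G]
    (h : ∀ χ ∈ Irr G, deg χ ≤ 2) :
    ∃ n : ℕ, 0 < n ∧ AD G = 2 - 1 / (n : ℝ) := by
  classical
  have := Fintype.ofFinite G
  obtain ⟨S, hS, hsq⟩ := exists_finset_eq_Irr_sum_sq (G := G)
  have hmem {χ} (hχ : χ ∈ S) : χ ∈ Irr G := hS ▸ hχ
  have hsq' : ∑ χ ∈ S, deg χ ^ 2 = Nat.card G := by
    have : ∑ χ ∈ S, (deg χ : ℂ) ^ 2 = Nat.card G := by
      rw [← hsq]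
      exact sum_congr rfl fun χ hχ => by rw [ofReal_deg_of_mem_Irr (hmem hχ)]
    exact_mod_cast this
  have hcube : ∑ χ ∈ S, deg χ ^ 3 = 2 * ∑ χ ∈ S, deg χ ^ 2 - #{χ ∈ S | χ 1 = 1} := by
    rw [mul_sum, natCast_card_filter, ← sum_sub_distrib]
    refine sum_congr rfl fun χ hχ => ?_
    obtain ⟨n, hn0, hn⟩ := exists_nat_eq_of_mem_Irr (hmem hχ)
    have hdeg : deg χ = n := by simp [deg, hn]
    have hn2 : n ≤ 2 := by exact_mod_cast hdeg ▸ h χ (hmem hχ)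
    interval_cases n <;> norm_num [hdeg, hn]
  have hlin : #{χ ∈ S | χ 1 = 1} = Nat.card (Abelianization G) := by
    rw [← ncard_setOf_mem_Irr_and_eq_one, hS, ← Set.ncard_coe_finset, coe_filter]
    rfl
  obtain ⟨n, hn⟩ : #{χ ∈ S | χ 1 = 1} ∣ Nat.card G :=
    hlin ▸ Subgroup.card_quotient_dvd_card _
  have hpos : 0 < #{χ ∈ S | χ 1 = 1} := hlin ▸ Nat.card_pos
  have hn0 : 0 < n := Nat.pos_of_mul_pos_left (hn ▸ Nat.card_pos)
  refine ⟨n, hn0, ?_⟩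
  rw [AD, hS, finsum_mem_coe_finset, hcube, hsq', hn]
  push_cast
  field_simp
end

section
/- Let G be a finite group, let φ be an irreducible complex character of G of degree n, and let K be the normal subgroup of G generated by the support supp(φ) = {x ∈ G : φ(x) ≠ 0}. Then the number of irreducible complex characters of G of degree n is at least |Irr₁(G)| / [G : K], where Irr₁(G) is the set of degree-1 characters of G. -/
noncomputable section

/-- `IrrDeg G n` is the set of irreducible complex characters of `G` of degree `n`. -/
def IrrDeg (G : Type) [Group G] (n : ℕ) : Set (G → ℂ) :=
  {χ ∈ Irr G | χ 1 = (n : ℂ)}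

/-! Multiplying by a linear character `λ` sends `Irrₙ(G)` into itself (`λ χ` is the character of
the simple module `λ ⊗ V`), so `λ ↦ λ χ` maps `Irr₁(G)` into `Irrₙ(G)`. If `λ χ = μ χ`, then `λ`
and `μ` agree on `supp χ`, so `λ / μ` is trivial on `K` and factors through `G / K`. Linear
characters of `G / K` are linearly independent functions on `G / K`, so there are at most `[G : K]`
of them, and this bounds every fibre of `λ ↦ λ χ`. -/
open CategoryTheory Module

theorem Set.ncard_preimage_le_mul_ncard {α β : Type*} {f : α → β} {t : Set β}
    (hs : (f ⁻¹' t).Finite) (ht : t.Finite) {n : ℕ} (hn : ∀ b ∈ t, (f ⁻¹' {b}).ncard ≤ n) :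
    (f ⁻¹' t).ncard ≤ n * t.ncard := by
  classical
  rw [Set.ncard_eq_toFinset_card _ hs, Set.ncard_eq_toFinset_card t ht]
  refine Finset.card_le_mul_card_image_of_maps_to (fun a ha => by simpa using ha) n
    fun b hb => ?_
  convert hn b (by simpa using hb) using 1
  rw [← Set.ncard_coe_finset]
  congr 1
  ext a
  simp only [Finset.coe_filter, Set.Finite.mem_toFinset, Set.mem_preimage, Set.mem_singleton_iff]
  exact ⟨And.right, fun h => ⟨h ▸ (by simpa using hb), h⟩⟩

section LinearCharacters

variable {G K : Type*} [Group G] [Field K]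

theorem linearIndependent_units_val_monoidHom :
    LinearIndependent K (fun (l : G →* Kˣ) (g : G) => (l g : K)) :=
  (linearIndependent_monoidHom G K).comp (fun l => (Units.coeHom K).comp l)
    fun _ _ h => MonoidHom.ext fun g => Units.ext (DFunLike.congr_fun h g)

instance [Finite G] : Finite (G →* Kˣ) :=
  have := Fintype.ofFinite G
  linearIndependent_units_val_monoidHom.finite

theorem card_monoidHom_units_le [Finite G] : Nat.card (G →* Kˣ) ≤ Nat.card G := by
  have := Fintype.ofFinite G
  have := Fintype.ofFinite (G →* Kˣ)
  simpa [Nat.card_eq_fintype_card] using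
    (linearIndependent_units_val_monoidHom (G := G) (K := K)).fintype_card_le_finrank

theorem normalClosure_support_le_ker_div {χ : G → K} {l l₀ : G →* Kˣ}
    (h : ∀ g, (l g : K) * χ g = l₀ g * χ g) :
    Subgroup.normalClosure {x | χ x ≠ 0} ≤ (l / l₀).ker := by
  refine Subgroup.normalClosure_le_normal fun x hx => ?_
  rw [SetLike.mem_coe, MonoidHom.mem_ker, MonoidHom.div_apply, div_eq_one]
  exact Units.ext (mul_right_cancel₀ hx (h x))

theorem ncard_fiber_le_index [Finite G] (χ : G → K) (l₀ : G →* Kˣ) :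
    {l : G →* Kˣ | ∀ g, (l g : K) * χ g = l₀ g * χ g}.ncard ≤
      (Subgroup.normalClosure {x | χ x ≠ 0}).index := by
  set N := Subgroup.normalClosure {x | χ x ≠ 0}
  let toQuotientHom (l : {l : G →* Kˣ | ∀ g, (l g : K) * χ g = l₀ g * χ g}) : G ⧸ N →* Kˣ :=
    QuotientGroup.lift N (l.1 / l₀) (normalClosure_support_le_ker_div l.2)
  have hinj : Function.Injective toQuotientHom := fun l l' h => by
    refine Subtype.ext (div_left_injective (b := l₀) (MonoidHom.ext fun g => ?_))
    exact DFunLike.congr_fun h (g : G ⧸ N)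
  calc _ = Nat.card _ := (Nat.card_coe_set_eq _).symm
    _ ≤ Nat.card (G ⧸ N →* Kˣ) := Nat.card_le_card_of_injective _ hinj
    _ ≤ N.index := card_monoidHom_units_le

theorem ncard_le_index_mul_ncard [Finite G] (χ : G → K) {B : Set (G → K)} (hB : B.Finite) :
    ((fun (l : G →* Kˣ) g => (l g : K) * χ g) ⁻¹' B).ncard ≤
      (Subgroup.normalClosure {x | χ x ≠ 0}).index * B.ncard := by
  refine Set.ncard_preimage_le_mul_ncard (Set.toFinite _) hB fun b _ => ?_
  obtain hempty | ⟨l₀, rfl⟩ := (Set.eq_empty_or_nonempty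
    ((fun (l : G →* Kˣ) g => (l g : K) * χ g) ⁻¹' {b}))
  · rw [hempty, Set.ncard_empty]
    exact Nat.zero_le _
  refine (Set.ncard_le_ncard (fun l hl => ?_) (Set.toFinite _)).trans (ncard_fiber_le_index χ l₀)
  exact congrFun hl

end LinearCharacters

universe u

open MonoidalCategory

namespace FDRep

variable {k G : Type u} [Field k]

theorem char_mul_of_finrank_eq_one [Monoid G] (V : FDRep k G) (hV : finrank k V = 1) (g h : G) :
    V.character (g * h) = V.character g * V.character h := by
  obtain ⟨a, ha, -⟩ := (V.ρ g).existsUnique_eq_smul_id_of_finrank_eq_one hV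
  obtain ⟨b, hb, -⟩ := (V.ρ h).existsUnique_eq_smul_id_of_finrank_eq_one hV
  simp [character, ha, hb, hV, smul_smul, Module.End.mul_eq_comp, mul_comm]

theorem exists_monoidHom_units_eq_character [Group G] (V : FDRep k G) (hV : finrank k V = 1) :
    ∃ l : G →* kˣ, (fun g => (l g : k)) = V.character :=
  ⟨MonoidHom.toHomUnits ⟨⟨V.character, by simp [hV]⟩, V.char_mul_of_finrank_eq_one hV⟩, rfl⟩

theorem finrank_eq_of_char_one_eq [CharZero k] [Monoid G] {V : FDRep k G} {n : ℕ}
    (h : V.character 1 = n) : finrank k V = n := by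
  exact_mod_cast V.char_one.symm.trans h

theorem simple_tensor_of_finrank_eq_one [Group G] [Fintype G] [IsAlgClosed k] [CharZero k]
    (W V : FDRep k G) [hV : Simple V] (hW : finrank k W = 1) : Simple (W ⊗ V) := by
  rw [simple_iff_char_is_norm_one] at hV ⊢
  have hunit (g : G) : W.character g * W.character g⁻¹ = 1 := by
    rw [← W.char_mul_of_finrank_eq_one hW, mul_inv_cancel, char_one, hW, Nat.cast_one]
  simp only [char_tensor, Pi.mul_apply]
  rw [← hV]
  refine Finset.sum_congr rfl fun g _ => ?_
  linear_combination (V.character g * V.character g⁻¹) * hunit g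

variable (k G) in
def charPairing [Group G] [Fintype G] : LinearMap.BilinForm k (G → k) :=
  LinearMap.mk₂ k (fun f f' => ∑ g, f g * f' g⁻¹)
    (fun _ _ _ => by simp only [Pi.add_apply, add_mul, Finset.sum_add_distrib])
    (fun _ _ _ => by simp only [Pi.smul_apply, smul_eq_mul, Finset.mul_sum, mul_assoc])
    (fun _ _ _ => by simp only [Pi.add_apply, mul_add, Finset.sum_add_distrib])
    (fun _ _ _ => by simp only [Pi.smul_apply, smul_eq_mul, Finset.mul_sum, mul_left_comm])

variable [Group G] [Fintype G] [IsAlgClosed k] [CharZero k]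

theorem charPairing_character_self (V : FDRep k G) [Simple V] :
    charPairing k G V.character V.character = Nat.card G :=
  (simple_iff_char_is_norm_one V).mp inferInstance

theorem charPairing_character_eq_zero (V W : FDRep k G) [Simple V] [Simple W]
    (h : V.character ≠ W.character) : charPairing k G V.character W.character = 0 := by
  have := invertibleOfNonzero (NeZero.ne (Nat.card G : k))
  have hortho := char_orthonormal V W
  rw [if_neg fun ⟨e⟩ => h (char_iso e), mul_eq_zero] at hortho
  exact hortho.resolve_left (inv_ne_zero (NeZero.ne _))

end FDRep

theorem linearIndependent_Irr (G : Type) [Group G] [Fintype G] :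
    LinearIndependent ℂ ((↑) : Irr G → G → ℂ) := by
  refine LinearMap.BilinForm.linearIndependent_of_iIsOrtho (B := FDRep.charPairing ℂ G)
    (fun ψ ψ' hne => ?_) fun ψ => ?_
  · obtain ⟨⟨V, _, hV⟩, ⟨W, _, hW⟩⟩ := And.intro ψ.2 ψ'.2
    simp only [Function.onFun, hV, hW]
    exact FDRep.charPairing_character_eq_zero V W (hV ▸ hW ▸ Subtype.coe_ne_coe.mpr hne)
  · obtain ⟨V, _, hV⟩ := ψ.2
    rw [hV, FDRep.charPairing_character_self]
    exact NeZero.ne _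

theorem finite_Irr (G : Type) [Group G] [Finite G] : (Irr G).Finite :=
  have := Fintype.ofFinite G
  have := (linearIndependent_Irr G).finite
  Set.toFinite _

theorem exists_monoidHom_units_of_mem_IrrDeg_one {G : Type} [Group G] {ψ : G → ℂ}
    (hψ : ψ ∈ IrrDeg G 1) : ∃ l : G →* ℂˣ, (fun g => (l g : ℂ)) = ψ := by
  obtain ⟨⟨W, -, rfl⟩, hW⟩ := hψ
  exact W.exists_monoidHom_units_eq_character (FDRep.finrank_eq_of_char_one_eq hW)

theorem mul_mem_IrrDeg {G : Type} [Group G] [Finite G] {ψ χ : G → ℂ} {n : ℕ}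
    (hψ : ψ ∈ IrrDeg G 1) (hχ : χ ∈ IrrDeg G n) : ψ * χ ∈ IrrDeg G n := by
  have := Fintype.ofFinite G
  obtain ⟨⟨W, -, rfl⟩, hW⟩ := hψ
  obtain ⟨⟨V, _, rfl⟩, hV⟩ := hχ
  have := FDRep.simple_tensor_of_finrank_eq_one W V (FDRep.finrank_eq_of_char_one_eq hW)
  refine ⟨⟨W ⊗ V, this, (FDRep.char_tensor W V).symm⟩, ?_⟩
  rw [Pi.mul_apply, hW, hV, Nat.cast_one, one_mul]

theorem stmt_10 (G : Type) [Group G] [Finite G]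
    (χ : G → ℂ) (n : ℕ) (hχ : χ ∈ IrrDeg G n)
    (K : Subgroup G) (hK : K = Subgroup.normalClosure {x : G | χ x ≠ 0}) :
    ((IrrDeg G 1).ncard : ℝ) / (K.index : ℝ) ≤ ((IrrDeg G n).ncard : ℝ) := by
  subst hK
  set twist := fun (l : G →* ℂˣ) g => (l g : ℂ) * χ g
  have hsub : IrrDeg G 1 ⊆ (fun (l : G →* ℂˣ) g => (l g : ℂ)) '' (twist ⁻¹' IrrDeg G n) := by
    intro ψ hψ
    obtain ⟨l, rfl⟩ := exists_monoidHom_units_of_mem_IrrDeg_one hψ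
    exact ⟨l, mul_mem_IrrDeg hψ hχ, rfl⟩
  have hcount : (IrrDeg G 1).ncard ≤ _ * (IrrDeg G n).ncard :=
    calc (IrrDeg G 1).ncard ≤ (twist ⁻¹' IrrDeg G n).ncard :=
          (Set.ncard_le_ncard hsub (Set.toFinite _)).trans (Set.ncard_image_le (Set.toFinite _))
      _ ≤ _ := ncard_le_index_mul_ncard χ ((finite_Irr G).subset fun _ h => h.1)
  rw [div_le_iff₀ (by exact_mod_cast Nat.pos_of_ne_zero Subgroup.index_ne_zero_of_finite), mul_comm]
  exact_mod_cast hcount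
end
end

section
/- Let G be a finite group and H a subgroup of G. Then AD(H) ≤ AD(G). -/
/-!
For `χ ∈ Irr G` and `φ ∈ Irr H` let `m(χ, φ) = ⟨χ|_H, φ⟩ ∈ ℕ`. Decomposing `χ|_H` gives
`d(χ) = ∑_φ m(χ, φ) d(φ)`, and pairing the regular character `∑_χ d(χ) χ = |G| δ_1` of `G`,
restricted to `H`, with `φ` gives `|G| d(φ) = |H| ∑_χ m(χ, φ) d(χ)`. By the first identity
`d(φ) ≤ d(χ)` whenever `m(χ, φ) ≠ 0`, hence
`|G| ∑_φ d(φ)³ = |H| ∑_{χ,φ} m d(χ) d(φ)² ≤ |H| ∑_{χ,φ} m d(χ)² d(φ) = |H| ∑_χ d(χ)³`.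
-/

noncomputable section

universe u

open Module CategoryTheory

theorem mul_sum_pow_three_le_of_branching {ι κ : Type*} (s : Finset ι) (t : Finset κ)
    (d : ι → ℝ) (e : κ → ℝ) (m : ι → κ → ℝ) {a b : ℝ} (hb : 0 ≤ b) (he : ∀ j ∈ t, 0 ≤ e j)
    (hm : ∀ i ∈ s, ∀ j ∈ t, ∃ n : ℕ, m i j = n)
    (hd : ∀ i ∈ s, d i = ∑ j ∈ t, m i j * e j)
    (hde : ∀ j ∈ t, a * e j = b * ∑ i ∈ s, d i * m i j) :
    a * ∑ j ∈ t, e j ^ 3 ≤ b * ∑ i ∈ s, d i ^ 3 := by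
  have hm0 : ∀ i ∈ s, ∀ j ∈ t, 0 ≤ m i j := fun i hi j hj => by
    obtain ⟨n, hn⟩ := hm i hi j hj
    exact hn ▸ n.cast_nonneg
  have hterm : ∀ i ∈ s, ∀ j ∈ t, e j ^ 2 * (d i * m i j) ≤ d i ^ 2 * (m i j * e j) := by
    intro i hi j hj
    obtain ⟨n, hn⟩ := hm i hi j hj
    rcases Nat.eq_zero_or_pos n with rfl | hpos
    · simp [hn]
    have hle : m i j * e j ≤ d i := hd i hi ▸ Finset.single_le_sum
      (fun k hk => mul_nonneg (hm0 i hi k hk) (he k hk)) hj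
    have hed : e j ≤ d i :=
      (le_mul_of_one_le_left (he j hj) (hn ▸ Nat.one_le_cast.2 hpos)).trans hle
    calc e j ^ 2 * (d i * m i j) = (d i * m i j * e j) * e j := by ring
      _ ≤ (d i * m i j * e j) * d i := mul_le_mul_of_nonneg_left hed
        (mul_nonneg (mul_nonneg ((he j hj).trans hed) (hm0 i hi j hj)) (he j hj))
      _ = d i ^ 2 * (m i j * e j) := by ring
  calc a * ∑ j ∈ t, e j ^ 3
      = b * ∑ j ∈ t, ∑ i ∈ s, e j ^ 2 * (d i * m i j) := by
        rw [Finset.mul_sum, Finset.mul_sum]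
        refine Finset.sum_congr rfl fun j hj => ?_
        rw [show a * e j ^ 3 = e j ^ 2 * (a * e j) by ring, hde j hj, mul_left_comm,
          Finset.mul_sum]
    _ ≤ b * ∑ j ∈ t, ∑ i ∈ s, d i ^ 2 * (m i j * e j) :=
        mul_le_mul_of_nonneg_left
          (Finset.sum_le_sum fun j hj => Finset.sum_le_sum fun i hi => hterm i hi j hj) hb
    _ = b * ∑ i ∈ s, d i ^ 3 := by
        rw [Finset.sum_comm]
        refine congrArg (b * ·) (Finset.sum_congr rfl fun i hi => ?_)
        rw [← Finset.mul_sum, ← hd i hi]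
        ring

section Subrepresentation

variable {k G V : Type*} [Field k] [Monoid G] [AddCommGroup V] [Module k V]
  {ρ : Representation k G V}

@[simp]
theorem Subrepresentation.toSubmodule_bot : (⊥ : Subrepresentation ρ).toSubmodule = ⊥ := rfl

@[simp]
theorem Subrepresentation.toSubmodule_top : (⊤ : Subrepresentation ρ).toSubmodule = ⊤ := rfl

theorem Subrepresentation.isCompl_toSubmodule {p q : Subrepresentation ρ} (h : IsCompl p q) :
    IsCompl p.toSubmodule q.toSubmodule :=
  ⟨disjoint_iff.2 (congrArg toSubmodule (disjoint_iff.1 h.1)),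
    codisjoint_iff.2 (congrArg toSubmodule (codisjoint_iff.1 h.2))⟩

theorem Subrepresentation.isIrreducible_toRepresentation {p : Subrepresentation ρ}
    (hp : IsAtom p) : p.toRepresentation.IsIrreducible := by
  have hmap := Submodule.map_injective_of_injective p.toSubmodule.injective_subtype
  refine { exists_pair_ne := ⟨⊥, ⊤, fun h => hp.1 ?_⟩, eq_bot_or_eq_top := fun r => ?_ }
  · have htop : (⊤ : Submodule k p.toSubmodule) = ⊥ := congrArg toSubmodule h.symm
    apply toSubmodule_injective
    simpa using congrArg (Submodule.map p.toSubmodule.subtype) htop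
  let r' : Subrepresentation ρ :=
    ⟨r.toSubmodule.map p.toSubmodule.subtype, by
      rintro g _ ⟨x, hx, rfl⟩
      exact ⟨p.toRepresentation g x, r.apply_mem_toSubmodule g hx, rfl⟩⟩
  have hle : r' ≤ p := by
    rintro _ ⟨x, -, rfl⟩
    exact x.2
  refine (hp.le_iff.1 hle).imp (fun h => ?_) (fun h => ?_) <;>
    refine toSubmodule_injective (hmap ?_) <;>
    simpa [r'] using congrArg toSubmodule h

theorem Representation.character_eq_add_of_isCompl [FiniteDimensional k V]
    {p q : Subrepresentation ρ} (h : IsCompl p q) :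
    ρ.character = p.toRepresentation.character + q.toRepresentation.character := by
  ext g
  let e := Submodule.prodEquivOfIsCompl _ _ (Subrepresentation.isCompl_toSubmodule h)
  have : ρ g = e.conj ((p.toRepresentation g).prodMap (q.toRepresentation g)) := by
    ext v
    obtain ⟨⟨a, b⟩, rfl⟩ := e.surjective v
    simp [e, LinearEquiv.conj_apply, Subrepresentation.toRepresentation]
  rw [Representation.character, this, LinearMap.trace_conj', LinearMap.trace_prodMap']
  rfl

end Subrepresentation

theorem FDRep.simple_of_isIrreducible_s13 {k G V : Type u} [Field k] [IsAlgClosed k] [CharZero k]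
    [Group G] [Fintype G] [AddCommGroup V] [Module k V] [FiniteDimensional k V]
    (ρ : Representation k G V) [ρ.IsIrreducible] : Simple (FDRep.of ρ) := by
  have : Invertible (Nat.card G : k) := invertibleOfNonzero (NeZero.ne _)
  rw [FDRep.simple_iff_char_is_norm_one]
  have := Representation.char_orthonormal ρ ρ
  rw [if_pos ⟨Representation.Equiv.refl ρ⟩, inv_mul_eq_one₀ (NeZero.ne _)] at this
  exact this.symm

section Characters

variable {K : Type} [Group K] [Fintype K]

variable (K) in
/-- On characters `g x⁻¹ = conj (g x)`, so this is the usual Hermitian inner product there;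
written this way it is bilinear. -/
def charInner : LinearMap.BilinForm ℂ (K → ℂ) :=
  LinearMap.mk₂ ℂ (fun f g => (Nat.card K : ℂ)⁻¹ * ∑ x, f x * g x⁻¹)
    (fun f f' g => by simp [add_mul, Finset.sum_add_distrib, mul_add])
    (fun c f g => by simp [Finset.mul_sum, mul_assoc, mul_left_comm])
    (fun f g g' => by simp [mul_add, Finset.sum_add_distrib])
    (fun c f g => by simp [Finset.mul_sum, mul_left_comm])

theorem charInner_apply (f g : K → ℂ) :
    charInner K f g = (Nat.card K : ℂ)⁻¹ * ∑ x, f x * g x⁻¹ := rfl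

theorem charInner_self_of_mem_irr {χ : K → ℂ} (hχ : χ ∈ Irr K) : charInner K χ χ = 1 := by
  obtain ⟨V, _, rfl⟩ := hχ
  have : Invertible (Nat.card K : ℂ) := invertibleOfNonzero (NeZero.ne _)
  rw [charInner_apply, FDRep.char_orthonormal, if_pos ⟨Iso.refl V⟩]

theorem charInner_eq_zero_of_mem_irr {χ ψ : K → ℂ} (hχ : χ ∈ Irr K) (hψ : ψ ∈ Irr K)
    (hne : χ ≠ ψ) : charInner K χ ψ = 0 := by
  obtain ⟨V, _, rfl⟩ := hχ
  obtain ⟨W, _, rfl⟩ := hψ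
  have : Invertible (Nat.card K : ℂ) := invertibleOfNonzero (NeZero.ne _)
  rw [charInner_apply, FDRep.char_orthonormal, if_neg fun ⟨i⟩ => hne (FDRep.char_iso i)]

theorem irr_finite : (Irr K).Finite :=
  LinearIndependent.setFinite <| LinearMap.BilinForm.linearIndependent_of_iIsOrtho
    (fun χ ψ h => charInner_eq_zero_of_mem_irr χ.2 ψ.2 (Subtype.coe_ne_coe.2 h))
    (fun χ => by simp [charInner_self_of_mem_irr χ.2])

variable (K) in
def irrFinset : Finset (K → ℂ) := irr_finite.toFinset

@[simp]
theorem mem_irrFinset {χ : K → ℂ} : χ ∈ irrFinset K ↔ χ ∈ Irr K := Set.Finite.mem_toFinset _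

theorem sum_charInner_smul_of_mem_irr {χ : K → ℂ} (hχ : χ ∈ Irr K) :
    ∑ ψ ∈ irrFinset K, charInner K χ ψ • ψ = χ := by
  rw [Finset.sum_eq_single_of_mem χ (mem_irrFinset.2 hχ), charInner_self_of_mem_irr hχ, one_smul]
  intro ψ hψ hne
  rw [charInner_eq_zero_of_mem_irr hχ (mem_irrFinset.1 hψ) hne.symm, zero_smul]

theorem sum_charInner_smul_of_mem_closure {f : K → ℂ} (hf : f ∈ AddSubmonoid.closure (Irr K)) :
    ∑ ψ ∈ irrFinset K, charInner K f ψ • ψ = f := by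
  induction hf using AddSubmonoid.closure_induction with
  | mem χ hχ => exact sum_charInner_smul_of_mem_irr hχ
  | zero => simp
  | add f g _ _ hf hg =>
    simp only [map_add, LinearMap.add_apply, add_smul, Finset.sum_add_distrib, hf, hg]

theorem exists_charInner_eq_natCast {f ψ : K → ℂ} (hf : f ∈ AddSubmonoid.closure (Irr K))
    (hψ : ψ ∈ Irr K) : ∃ n : ℕ, charInner K f ψ = n := by
  induction hf using AddSubmonoid.closure_induction with
  | mem χ hχ =>
    by_cases h : χ = ψ
    · exact ⟨1, by rw [h, charInner_self_of_mem_irr hψ, Nat.cast_one]⟩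
    · exact ⟨0, by rw [charInner_eq_zero_of_mem_irr hχ hψ h, Nat.cast_zero]⟩
  | zero => exact ⟨0, by simp⟩
  | add f g _ _ hf hg =>
    obtain ⟨m, hm⟩ := hf
    obtain ⟨n, hn⟩ := hg
    exact ⟨m + n, by rw [map_add, LinearMap.add_apply, hm, hn, Nat.cast_add]⟩

theorem Representation.character_mem_closure_irr {V : Type} [AddCommGroup V] [Module ℂ V]
    [FiniteDimensional ℂ V] (ρ : Representation ℂ K V) :
    ρ.character ∈ AddSubmonoid.closure (Irr K) := by
  induction h : finrank ℂ V using Nat.strong_induction_on generalizing V with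
  | _ n ih =>
  rcases subsingleton_or_nontrivial V with hV | hV
  · have : ρ.character = 0 := by
      ext g
      simp [Representation.character, Subsingleton.elim (ρ g) 0]
    exact this ▸ zero_mem _
  have : WellFoundedLT (Subrepresentation ρ) :=
    StrictMono.wellFoundedLT (f := Subrepresentation.toSubmodule) fun _ _ h => h
  obtain ⟨p, hp, -⟩ := (eq_bot_or_exists_atom_le (⊤ : Subrepresentation ρ)).resolve_left
    fun h => bot_ne_top (congrArg Subrepresentation.toSubmodule h).symm
  -- the lattice of subrepresentations is complemented by Maschke's theorem
  obtain ⟨q, hpq⟩ := exists_isCompl p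
  have := p.isIrreducible_toRepresentation hp
  rw [ρ.character_eq_add_of_isCompl hpq]
  refine add_mem (AddSubmonoid.subset_closure
    ⟨FDRep.of p.toRepresentation, FDRep.simple_of_isIrreducible_s13 _, rfl⟩) (ih _ ?_ _ rfl)
  have hp0 : p.toSubmodule ≠ ⊥ := fun h => hp.1 (Subrepresentation.toSubmodule_injective h)
  have := Submodule.finrank_add_eq_of_isCompl (Subrepresentation.isCompl_toSubmodule hpq)
  have := Submodule.one_le_finrank_iff.2 hp0
  omega

theorem character_leftRegular [DecidableEq K] (g : K) :
    (Representation.leftRegular ℂ K).character g = if g = 1 then (Nat.card K : ℂ) else 0 := by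
  rw [Representation.character, LinearMap.trace_eq_matrix_trace ℂ (MonoidAlgebra.basis K ℂ),
    Matrix.trace]
  simp [LinearMap.toMatrix_apply, MonoidAlgebra.basis, Finsupp.single_apply, mul_eq_right]

theorem charInner_character_leftRegular (f : K → ℂ) :
    charInner K (Representation.leftRegular ℂ K).character f = f 1 := by
  classical
  simp [charInner_apply, character_leftRegular]

theorem sum_apply_one_mul_apply (g : K) :
    ∑ χ ∈ irrFinset K, χ 1 * χ g = (Representation.leftRegular ℂ K).character g := by
  conv_rhs => rw [← sum_charInner_smul_of_mem_closure
    (Representation.leftRegular ℂ K).character_mem_closure_irr]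
  simp [Finset.sum_apply, charInner_character_leftRegular]

end Characters

theorem ofReal_deg_of_mem_irr {K : Type} [Group K] {χ : K → ℂ} (hχ : χ ∈ Irr K) :
    (deg χ : ℂ) = χ 1 := by
  obtain ⟨V, -, rfl⟩ := hχ
  simp [deg]

theorem deg_nonneg_of_mem_irr {K : Type} [Group K] {χ : K → ℂ} (hχ : χ ∈ Irr K) :
    0 ≤ deg χ := by
  obtain ⟨V, -, rfl⟩ := hχ
  simp [deg]

section Restriction

variable {G : Type} [Group G] (H : Subgroup G) [Fintype H]

theorem restrict_mem_closure_irr {χ : G → ℂ} (hχ : χ ∈ Irr G) :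
    (fun h : H => χ h) ∈ AddSubmonoid.closure (Irr H) := by
  obtain ⟨V, -, rfl⟩ := hχ
  exact Representation.character_mem_closure_irr (V.ρ.comp H.subtype)

def restrictMult (χ : G → ℂ) (φ : H → ℂ) : ℝ := (charInner H (fun h => χ h) φ).re

variable {H}

theorem exists_restrictMult_eq_natCast {χ : G → ℂ} {φ : H → ℂ} (hχ : χ ∈ Irr G)
    (hφ : φ ∈ Irr H) : ∃ n : ℕ, restrictMult H χ φ = n := by
  obtain ⟨n, hn⟩ := exists_charInner_eq_natCast (restrict_mem_closure_irr H hχ) hφ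
  exact ⟨n, by simp [restrictMult, hn]⟩

theorem ofReal_restrictMult {χ : G → ℂ} {φ : H → ℂ} (hχ : χ ∈ Irr G) (hφ : φ ∈ Irr H) :
    (restrictMult H χ φ : ℂ) = charInner H (fun h => χ h) φ := by
  obtain ⟨n, hn⟩ := exists_charInner_eq_natCast (restrict_mem_closure_irr H hχ) hφ
  simp [restrictMult, hn]

theorem deg_eq_sum_restrictMult_mul_deg {χ : G → ℂ} (hχ : χ ∈ Irr G) :
    deg χ = ∑ φ ∈ irrFinset H, restrictMult H χ φ * deg φ := by
  apply Complex.ofReal_injective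
  have := congrFun (sum_charInner_smul_of_mem_closure (restrict_mem_closure_irr H hχ)) 1
  simp only [Finset.sum_apply, Pi.smul_apply, smul_eq_mul, OneMemClass.coe_one] at this
  push_cast
  rw [ofReal_deg_of_mem_irr hχ, ← this]
  refine Finset.sum_congr rfl fun φ hφ => ?_
  rw [ofReal_restrictMult hχ (mem_irrFinset.1 hφ), ofReal_deg_of_mem_irr (mem_irrFinset.1 hφ)]

theorem card_mul_deg_eq_sum_deg_mul_restrictMult [Fintype G] {φ : H → ℂ} (hφ : φ ∈ Irr H) :
    (Nat.card G : ℝ) * deg φ = Nat.card H * ∑ χ ∈ irrFinset G, deg χ * restrictMult H χ φ := by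
  apply Complex.ofReal_injective
  push_cast
  rw [Finset.sum_congr rfl fun χ hχ => by
    rw [ofReal_deg_of_mem_irr (mem_irrFinset.1 hχ), ofReal_restrictMult (mem_irrFinset.1 hχ) hφ]]
  have hreg : ∑ χ ∈ irrFinset G, χ 1 * charInner H (fun h => χ h) φ =
      (Nat.card H : ℂ)⁻¹ * ∑ h : H, (Representation.leftRegular ℂ G).character h * φ h⁻¹ := by
    simp_rw [← sum_apply_one_mul_apply, Finset.sum_mul, charInner_apply, Finset.mul_sum]
    rw [Finset.sum_comm]
    exact Finset.sum_congr rfl fun _ _ => Finset.sum_congr rfl fun _ _ => by ring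
  classical
  rw [hreg, ofReal_deg_of_mem_irr hφ, Finset.sum_eq_single_of_mem 1 (Finset.mem_univ _)]
  · rw [OneMemClass.coe_one, character_leftRegular, if_pos rfl, inv_one]
    field_simp
  · intro h _ hne
    rw [character_leftRegular, if_neg (by simpa using hne), zero_mul]

end Restriction

theorem stmt_13 (G : Type) [Group G] [Finite G] (H : Subgroup G) :
    AD H ≤ AD G := by
  have := Fintype.ofFinite G
  have := Fintype.ofFinite H
  have hG : (0 : ℝ) < Nat.card G := Nat.cast_pos.2 Nat.card_pos
  have hH : (0 : ℝ) < Nat.card H := Nat.cast_pos.2 Nat.card_pos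
  rw [AD, AD, finsum_mem_eq_finite_toFinset_sum _ irr_finite,
    finsum_mem_eq_finite_toFinset_sum _ irr_finite, one_div_mul_eq_div, one_div_mul_eq_div,
    div_le_div_iff₀ hH hG, mul_comm, mul_comm _ (Nat.card H : ℝ)]
  exact mul_sum_pow_three_le_of_branching (irrFinset G) (irrFinset H) deg deg (restrictMult H)
    hH.le (fun φ hφ => deg_nonneg_of_mem_irr (mem_irrFinset.1 hφ))
    (fun χ hχ φ hφ => exists_restrictMult_eq_natCast (mem_irrFinset.1 hχ) (mem_irrFinset.1 hφ))
    (fun χ hχ => deg_eq_sum_restrictMult_mul_deg (mem_irrFinset.1 hχ))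
    (fun φ hφ => card_mul_deg_eq_sum_deg_mul_restrictMult (mem_irrFinset.1 hφ))
end
end

section
/- Let X be a finite non-empty set, let d ≥ 1 be a real number, and let f : X → ℝ satisfy -1 ≤ f(x) ≤ d for all x ∈ X, Σ_{x ∈ X} f(x) = 0, and Σ_{x ∈ X} f(x)² = |X|. Then the number of x ∈ X with f(x) ≠ 0 is at least |X|/d. -/
/-!
On `[-1, d]` the parabola `t ^ 2` lies below its chord `(d - 1) t + d`, because
`(t + 1) (t - d) ≤ 0`. Summing this over the support `S` of `f`, where all of the mass of
`∑ f` and `∑ f ^ 2` sits, gives `|X| ≤ (d - 1) · 0 + d |S|`.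
-/

open Finset

lemma sq_le_chord_of_mem_Icc {t d : ℝ} (ht : t ∈ Set.Icc (-1) d) : t ^ 2 ≤ (d - 1) * t + d := by
  nlinarith [ht.1, ht.2]

lemma sum_sq_le_chord {ι : Type*} (s : Finset ι) (f : ι → ℝ) {d : ℝ}
    (hf : ∀ x ∈ s, f x ∈ Set.Icc (-1) d) :
    ∑ x ∈ s, f x ^ 2 ≤ (d - 1) * ∑ x ∈ s, f x + d * #s := by
  calc ∑ x ∈ s, f x ^ 2 ≤ ∑ x ∈ s, ((d - 1) * f x + d) :=
        sum_le_sum fun x hx => sq_le_chord_of_mem_Icc (hf x hx)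
    _ = (d - 1) * ∑ x ∈ s, f x + d * #s := by
        rw [sum_add_distrib, ← mul_sum, sum_const, nsmul_eq_mul]
        ring

lemma card_le_mul_card_support {X : Type*} [Fintype X] [DecidableEq X] {d : ℝ} (f : X → ℝ)
    (hf : ∀ x, f x ∈ Set.Icc (-1) d) (hmean : ∑ x, f x = 0)
    (hvar : ∑ x, f x ^ 2 = Fintype.card X) :
    (Fintype.card X : ℝ) ≤ d * #{x | f x ≠ 0} := by
  have hmean' : ∑ x with f x ≠ 0, f x = 0 := by rw [sum_filter_ne_zero, hmean]
  have hvar' : ∑ x with f x ≠ 0, f x ^ 2 = Fintype.card X := by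
    rw [← hvar]
    exact sum_filter_of_ne fun x _ hx h0 => hx (by rw [h0, zero_pow two_ne_zero])
  have := sum_sq_le_chord {x | f x ≠ 0} f fun x _ => hf x
  rw [hmean', hvar'] at this
  linarith

theorem stmt_16_general (X : Type) [Fintype X]
    (d : ℝ) (hd : 1 ≤ d) (f : X → ℝ)
    (hrange : ∀ x, -1 ≤ f x ∧ f x ≤ d)
    (hmean : ∑ x, f x = 0)
    (hvar : ∑ x, f x ^ 2 = (Fintype.card X : ℝ)) :
    (Fintype.card X : ℝ) / d ≤ ({x : X | f x ≠ 0}.ncard : ℝ) := by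
  classical
  have hsupport : {x : X | f x ≠ 0}.ncard = #{x | f x ≠ 0} := by
    rw [← Set.ncard_coe_finset, coe_filter_univ]
  rw [hsupport, div_le_iff₀ (by linarith), mul_comm]
  exact card_le_mul_card_support f (fun x => hrange x) hmean hvar

theorem stmt_16 (X : Type) [Fintype X] [Nonempty X]
    (d : ℝ) (hd : 1 ≤ d) (f : X → ℝ)
    (hrange : ∀ x, -1 ≤ f x ∧ f x ≤ d)
    (hmean : ∑ x, f x = 0)
    (hvar : ∑ x, f x ^ 2 = (Fintype.card X : ℝ)) :
    (Fintype.card X : ℝ) / d ≤ ({x : X | f x ≠ 0}.ncard : ℝ) :=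
  stmt_16_general X d hd f hrange hmean hvar
end
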